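/- The function κ̂(z,w) := e^{(z−w)²} f(z,w), with f(z,w) := (1/√2)∫_{−∞}^{0}[e^{−2(z−u)²}erfc(√2(w−u)) − e^{−2(w−u)²}erfc(√2(z−u))]du, satisfies the first-order ODE ∂_z κ̂(z,w) = 2(z−w) κ̂(z,w) + erfc(z+w) − (1/√2) e^{(z−w)²−2z²} erfc(√2 w). -/

import Mathlib

/-- The complementary error function extended to complex arguments. -/
noncomputable def cerfc (z : ℂ) : ℂ :=
  1 - (2 / (Real.sqrt Real.pi : ℂ)) * ∫ t in (0:ℝ)..1, z * Complex.exp (-((t : ℂ) * z) ^ 2)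

/-- `f(z,w) = (1/√2) ∫_{-∞}^0 [e^{-2(z-u)²} erfc(√2(w-u)) - e^{-2(w-u)²} erfc(√2(z-u))] du`. -/
noncomputable def fEdge (z w : ℂ) : ℂ :=
  (1 / (Real.sqrt 2 : ℂ)) * ∫ u in Set.Iio (0:ℝ),
    (Complex.exp (-2 * (z - (u : ℂ)) ^ 2) * cerfc ((Real.sqrt 2 : ℂ) * (w - (u : ℂ)))
      - Complex.exp (-2 * (w - (u : ℂ)) ^ 2) * cerfc ((Real.sqrt 2 : ℂ) * (z - (u : ℂ))))

/-- `κ̂(z,w) = e^{(z-w)²} f(z,w)`. -/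
noncomputable def kappaHat (z w : ℂ) : ℂ := Complex.exp ((z - w) ^ 2) * fEdge z w

/-!
Differentiating under the integral sign, the `z`-derivative of the integrand of `f` is
`-4(z-u) e^{-2(z-u)²} erfc(√2(w-u)) + (2√2/√π) e^{-2(z-u)²} e^{-2(w-u)²}`.
Up to a multiple of the Gaussian product, the first term is the `u`-derivative of
`e^{-2(z-u)²} erfc(√2(w-u))`, so it integrates over `u < 0` to `-e^{-2z²} erfc(√2 w)`.
The Gaussian product is `e^{-(z-w)²} e^{-4((z+w)/2-u)²}`, and
`∫_{u<0} e^{-c²(m-u)²} du = √π/(2c) erfc(c m)` because both sides have the same derivative in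
`m` and agree at `m = 0`. Every integrand involved is bounded on `u ≤ 0` by `C eᵘ`, locally
uniformly in the complex parameter, which justifies differentiating under the integral and
the integration by parts. The derivative of `erfc` itself comes from a global primitive of
the entire function `e^{-z²}`.
-/

open MeasureTheory Real Set Filter Metric
open scoped Topology Complex

theorem integral_mul_cexp_neg_sq_eq_sub {F : ℂ → ℂ} (hF : ∀ z, HasDerivAt F (cexp (-z ^ 2)) z)
    (z : ℂ) : ∫ t in (0 : ℝ)..1, z * cexp (-((t : ℂ) * z) ^ 2) = F z - F 0 := by
  have hderiv (t : ℝ) :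
      HasDerivAt (fun t : ℝ => F (t * z)) (z * cexp (-((t : ℂ) * z) ^ 2)) t := by
    have := (hF (t * z)).comp (t : ℂ) (hasDerivAt_mul_const z)
    rw [mul_comm] at this
    exact this.comp_ofReal
  rw [intervalIntegral.integral_eq_sub_of_hasDerivAt (fun t _ => hderiv t)
    ((by fun_prop : Continuous fun t : ℝ => z * cexp (-((t : ℂ) * z) ^ 2)).intervalIntegrable _ _)]
  simp

theorem hasDerivAt_cerfc (z : ℂ) : HasDerivAt cerfc (-(2 / √π) * cexp (-z ^ 2)) z := by
  obtain ⟨F, hF⟩ := (by fun_prop : Differentiable ℂ fun z : ℂ => cexp (-z ^ 2)).isExactOn_univ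
  have hF' (z : ℂ) : HasDerivAt F (cexp (-z ^ 2)) z := hF z (mem_univ z)
  have hcerfc : cerfc = fun z => 1 - 2 / √π * (F z - F 0) := by
    ext z
    rw [cerfc, integral_mul_cexp_neg_sq_eq_sub hF']
  rw [hcerfc]
  simpa using (((hF' z).sub_const (F 0)).const_mul (2 / (√π : ℂ))).const_sub 1

theorem HasDerivAt.cerfc {f : ℂ → ℂ} {f' x : ℂ} (hf : HasDerivAt f f' x) :
    HasDerivAt (fun x => cerfc (f x)) (-(2 / √π) * cexp (-f x ^ 2) * f') x :=
  (hasDerivAt_cerfc (f x)).comp x hf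

@[fun_prop]
theorem continuous_cerfc : Continuous cerfc :=
  continuous_iff_continuousAt.2 fun z => (hasDerivAt_cerfc z).continuousAt

theorem cerfc_zero : cerfc 0 = 1 := by simp [cerfc]

theorem norm_cerfc_le (a : ℂ) : ‖cerfc a‖ ≤ 1 + 2 / √π * ‖a‖ * rexp (a.im ^ 2) := by
  have hint : ‖∫ t in (0 : ℝ)..1, a * cexp (-((t : ℂ) * a) ^ 2)‖
      ≤ ‖a‖ * rexp (a.im ^ 2) * |1 - 0| := by
    refine intervalIntegral.norm_integral_le_of_norm_le_const fun t ht => ?_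
    rw [uIoc_of_le zero_le_one] at ht
    rw [norm_mul, Complex.norm_exp]
    gcongr
    have hre : (-((t : ℂ) * a) ^ 2).re = t ^ 2 * (a.im ^ 2 - a.re ^ 2) := by
      simp [sq]; ring
    have ht2 : t ^ 2 ≤ 1 := by nlinarith [ht.1, ht.2]
    rw [hre]
    nlinarith [mul_nonneg (sq_nonneg t) (sq_nonneg a.re),
      mul_le_mul_of_nonneg_right ht2 (sq_nonneg a.im)]
  calc ‖cerfc a‖
      ≤ ‖(1 : ℂ)‖ + ‖2 / (√π : ℂ) * ∫ t in (0 : ℝ)..1, a * cexp (-((t : ℂ) * a) ^ 2)‖ :=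
        norm_sub_le _ _
    _ ≤ 1 + 2 / √π * ‖a‖ * rexp (a.im ^ 2) := by
        rw [norm_one, norm_mul, mul_assoc]
        gcongr
        · simp [abs_of_pos (sqrt_pos.2 pi_pos)]
        · simpa using hint

def ExpBoundedOn (s : Set ℂ) (k : ℝ) (F : ℂ → ℝ → ℂ) : Prop :=
  ∃ C, ∀ x ∈ s, ∀ u ≤ (0 : ℝ), ‖F x u‖ ≤ C * rexp (k * u)

namespace ExpBoundedOn

variable {s t : Set ℂ} {k l : ℝ} {F G : ℂ → ℝ → ℂ}

theorem mono (h : ExpBoundedOn t k F) (hst : s ⊆ t) (hlk : l ≤ k) : ExpBoundedOn s l F := by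
  obtain ⟨C, hC⟩ := h
  refine ⟨C, fun x hx u hu => (hC x (hst hx) u hu).trans ?_⟩
  have hC0 : 0 ≤ C :=
    nonneg_of_mul_nonneg_left ((norm_nonneg _).trans (hC x (hst hx) u hu)) (exp_pos _)
  exact mul_le_mul_of_nonneg_left (exp_le_exp.2 (by nlinarith)) hC0

theorem congr (h : ExpBoundedOn s k F) (hFG : ∀ x u, F x u = G x u) : ExpBoundedOn s k G := by
  obtain ⟨C, hC⟩ := h
  exact ⟨C, fun x hx u hu => hFG x u ▸ hC x hx u hu⟩

theorem comp_const (h : ExpBoundedOn t k F) {w : ℂ} (hw : w ∈ t) :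
    ExpBoundedOn s k fun _ u => F w u := by
  obtain ⟨C, hC⟩ := h
  exact ⟨C, fun _ _ u hu => hC w hw u hu⟩

theorem mul (hF : ExpBoundedOn s k F) (hG : ExpBoundedOn s l G) :
    ExpBoundedOn s (k + l) fun x u => F x u * G x u := by
  obtain ⟨C, hC⟩ := hF
  obtain ⟨D, hD⟩ := hG
  refine ⟨C * D, fun x hx u hu => ?_⟩
  rw [norm_mul, add_mul, exp_add, mul_mul_mul_comm]
  exact mul_le_mul (hC x hx u hu) (hD x hx u hu) (norm_nonneg _)
    ((norm_nonneg _).trans (hC x hx u hu))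

theorem const_mul (c : ℂ) (hF : ExpBoundedOn s k F) :
    ExpBoundedOn s k fun x u => c * F x u := by
  obtain ⟨C, hC⟩ := hF
  refine ⟨‖c‖ * C, fun x hx u hu => ?_⟩
  rw [norm_mul, mul_assoc]
  exact mul_le_mul_of_nonneg_left (hC x hx u hu) (norm_nonneg c)

theorem add (hF : ExpBoundedOn s k F) (hG : ExpBoundedOn s k G) :
    ExpBoundedOn s k fun x u => F x u + G x u := by
  obtain ⟨C, hC⟩ := hF
  obtain ⟨D, hD⟩ := hG
  refine ⟨C + D, fun x hx u hu => ?_⟩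
  rw [add_mul]
  exact (norm_add_le _ _).trans (add_le_add (hC x hx u hu) (hD x hx u hu))

theorem neg (hF : ExpBoundedOn s k F) : ExpBoundedOn s k fun x u => -F x u := by
  simpa [ExpBoundedOn] using hF

theorem sub (hF : ExpBoundedOn s k F) (hG : ExpBoundedOn s k G) :
    ExpBoundedOn s k fun x u => F x u - G x u := by
  simpa only [sub_eq_add_neg] using hF.add hG.neg

theorem integrableOn (h : ExpBoundedOn s 1 F) {x : ℂ} (hx : x ∈ s) (hc : Continuous (F x)) :
    IntegrableOn (F x) (Iic 0) := by
  obtain ⟨C, hC⟩ := h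
  refine ((integrableOn_exp_Iic 0).const_mul C).mono' hc.aestronglyMeasurable.restrict ?_
  filter_upwards [ae_restrict_mem measurableSet_Iic] with u hu
  simpa using hC x hx u hu

theorem tendsto_atBot (h : ExpBoundedOn s k F) (hk : 0 < k) {x : ℂ} (hx : x ∈ s) :
    Tendsto (F x) atBot (𝓝 0) := by
  obtain ⟨C, hC⟩ := h
  have hlim : Tendsto (fun u : ℝ => C * rexp (k * u)) atBot (𝓝 0) := by
    simpa using (tendsto_exp_atBot.comp (tendsto_id.const_mul_atBot hk)).const_mul C
  refine squeeze_zero_norm' ?_ hlim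
  filter_upwards [eventually_le_atBot 0] with u hu
  exact hC x hx u hu

end ExpBoundedOn

theorem norm_sub_ofReal_le_mul_exp {x : ℂ} {R u : ℝ} (hx : ‖x‖ ≤ R) (hu : u ≤ 0) :
    ‖x - u‖ ≤ (R + 1) * rexp (-1 * u) :=
  calc ‖x - u‖ ≤ ‖x‖ + |u| := by simpa using norm_sub_le x (u : ℂ)
    _ ≤ (R + 1) * (1 - u) := by rw [abs_of_nonpos hu]; nlinarith [(norm_nonneg x).trans hx]
    _ ≤ (R + 1) * rexp (-1 * u) := by
        gcongr
        · linarith [(norm_nonneg x).trans hx]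
        · linarith [add_one_le_exp (-1 * u)]

theorem expBoundedOn_sub_ofReal {s : Set ℂ} (hs : Bornology.IsBounded s) :
    ExpBoundedOn s (-1) fun x u => x - u := by
  obtain ⟨R, -, hR⟩ := hs.exists_pos_norm_le
  exact ⟨R + 1, fun x hx u hu => norm_sub_ofReal_le_mul_exp (hR x hx) hu⟩

theorem expBoundedOn_cerfc_mul_sub {s : Set ℂ} (hs : Bornology.IsBounded s) (a : ℝ) :
    ExpBoundedOn s (-1) fun x u => cerfc (a * (x - u)) := by
  obtain ⟨R, hR0, hR⟩ := hs.exists_pos_norm_le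
  refine ⟨1 + 2 / √π * (|a| * (R + 1)) * rexp (a ^ 2 * R ^ 2), fun x hx u hu => ?_⟩
  have hnorm : ‖(a : ℂ) * (x - u)‖ ≤ |a| * (R + 1) * rexp (-1 * u) := by
    rw [norm_mul, Complex.norm_real, norm_eq_abs, mul_assoc]
    exact mul_le_mul_of_nonneg_left (norm_sub_ofReal_le_mul_exp (hR x hx) hu) (abs_nonneg a)
  have him : ((a : ℂ) * (x - u)).im ^ 2 ≤ a ^ 2 * R ^ 2 := by
    have : |x.im| ≤ |R| := ((Complex.abs_im_le_norm x).trans (hR x hx)).trans (le_abs_self R)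
    simpa [mul_pow] using mul_le_mul_of_nonneg_left (sq_le_sq.2 this) (sq_nonneg a)
  have hexp : 1 ≤ rexp (-1 * u) := one_le_exp (by linarith)
  calc ‖cerfc (a * (x - u))‖
      ≤ 1 + 2 / √π * ‖(a : ℂ) * (x - u)‖ * rexp (((a : ℂ) * (x - u)).im ^ 2) := norm_cerfc_le _
    _ ≤ 1 * rexp (-1 * u) + 2 / √π * (|a| * (R + 1) * rexp (-1 * u)) * rexp (a ^ 2 * R ^ 2) := by
        gcongr
        linarith
    _ = (1 + 2 / √π * (|a| * (R + 1)) * rexp (a ^ 2 * R ^ 2)) * rexp (-1 * u) := by ring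

theorem expBoundedOn_cexp_neg_mul_sq {s : Set ℂ} (hs : Bornology.IsBounded s) {c : ℝ}
    (hc : 0 < c) (k : ℝ) : ExpBoundedOn s k fun x u => cexp (-c * (x - u) ^ 2) := by
  obtain ⟨R, -, hR⟩ := hs.exists_pos_norm_le
  set M := 2 * c * R + |k|
  refine ⟨rexp (c * R ^ 2 + M ^ 2 / (4 * c)), fun x hx u hu => ?_⟩
  have hre : |x.re| ≤ R := (Complex.abs_re_le_norm x).trans (hR x hx)
  have him : x.im ^ 2 ≤ R ^ 2 :=
    sq_le_sq' (abs_le.1 ((Complex.abs_im_le_norm x).trans (hR x hx))).1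
      (abs_le.1 ((Complex.abs_im_le_norm x).trans (hR x hx))).2
  have hlin : (2 * c * x.re - k) * u ≤ M * -u := by
    have : |2 * c * x.re - k| ≤ M := by
      refine (abs_sub _ _).trans ?_
      rw [abs_mul, abs_of_pos (by positivity : (0 : ℝ) < 2 * c)]
      nlinarith
    nlinarith [neg_abs_le (2 * c * x.re - k), le_abs_self (2 * c * x.re - k)]
  -- the concave quadratic `M v - c v²` is at most its maximum `M² / (4c)`
  have hquad : M * -u - c * u ^ 2 ≤ M ^ 2 / (4 * c) := by
    rw [le_div_iff₀ (by positivity)]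
    nlinarith [sq_nonneg (M - 2 * c * -u)]
  have hre_exp : (-(c : ℂ) * (x - u) ^ 2).re = -c * ((x.re - u) ^ 2 - x.im ^ 2) := by simp [sq]
  rw [Complex.norm_exp, ← exp_add, exp_le_exp, hre_exp]
  nlinarith [sq_nonneg x.re]

theorem expBoundedOn_cexp_neg_two_mul_sq {s : Set ℂ} (hs : Bornology.IsBounded s) (k : ℝ) :
    ExpBoundedOn s k fun x u => cexp (-2 * (x - u) ^ 2) :=
  (expBoundedOn_cexp_neg_mul_sq hs two_pos k).congr fun x u => by norm_num

theorem hasDerivAt_integral_Iio {F F' : ℂ → ℝ → ℂ} {x₀ : ℂ} (hF : ∀ x, Continuous (F x))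
    (hF' : Continuous (F' x₀)) (hF₀ : ExpBoundedOn {x₀} 1 F)
    (hF'_bound : ExpBoundedOn (ball x₀ 1) 1 F') (hderiv : ∀ x u, HasDerivAt (F · u) (F' x u) x) :
    HasDerivAt (fun x => ∫ u in Iio 0, F x u) (∫ u in Iio 0, F' x₀ u) x₀ := by
  obtain ⟨C, hC⟩ := hF'_bound
  refine (hasDerivAt_integral_of_dominated_loc_of_deriv_le (bound := fun u => C * rexp u)
    (ball_mem_nhds x₀ one_pos) (.of_forall fun x => (hF x).aestronglyMeasurable)
    ((hF₀.integrableOn (mem_singleton x₀) (hF x₀)).mono_set Iio_subset_Iic_self)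
    hF'.aestronglyMeasurable ?_
    (((integrableOn_exp_Iic 0).mono_set Iio_subset_Iic_self).const_mul C)
    (.of_forall fun u x _ => hderiv x u)).2
  filter_upwards [ae_restrict_mem measurableSet_Iio] with u hu x hx
  simpa using hC x hx u hu.le

theorem HasDerivAt.cexp_neg_mul_sq {f : ℂ → ℂ} {f' x : ℂ} (hf : HasDerivAt f f' x) (a : ℂ) :
    HasDerivAt (fun x => cexp (-a * f x ^ 2)) (-2 * a * f x * f' * cexp (-a * f x ^ 2)) x :=
  ((hf.fun_pow 2).const_mul (-a)).cexp.congr_deriv (by ring)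

theorem integral_Iio_cexp_neg_sq {c : ℝ} (hc : 0 < c) :
    ∫ u in Iio (0 : ℝ), cexp (-c ^ 2 * u ^ 2) = √π / (2 * c) := by
  have hreal : ∫ u in Iio (0 : ℝ), rexp (-c ^ 2 * u ^ 2) = √π / (2 * c) := by
    have hneg := integral_comp_neg_Ioi 0 fun u => rexp (-c ^ 2 * u ^ 2)
    simp only [neg_sq, neg_zero] at hneg
    rw [← integral_Iic_eq_integral_Iio, ← hneg, integral_gaussian_Ioi, sqrt_div pi_pos.le,
      sqrt_sq hc.le]
    ring
  have hcast (u : ℝ) : cexp (-c ^ 2 * u ^ 2) = ↑(rexp (-c ^ 2 * u ^ 2)) := by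
    rw [Complex.ofReal_exp]; push_cast; rfl
  simp_rw [hcast, integral_complex_ofReal, hreal]
  push_cast; ring

theorem hasDerivAt_integral_Iio_cexp_neg_sq {c : ℝ} (hc : 0 < c) (m : ℂ) :
    HasDerivAt (fun m => ∫ u in Iio (0 : ℝ), cexp (-c ^ 2 * (m - u) ^ 2))
      (-cexp (-c ^ 2 * m ^ 2)) m := by
  have hgauss (s : Set ℂ) (hs : Bornology.IsBounded s) (k : ℝ) :
      ExpBoundedOn s k fun x u => cexp (-c ^ 2 * (x - u) ^ 2) := by
    simpa using expBoundedOn_cexp_neg_mul_sq hs (by positivity : 0 < c ^ 2) k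
  have hF' : ExpBoundedOn (ball m 1) 1
      fun x u => -2 * c ^ 2 * (x - u) * cexp (-c ^ 2 * (x - u) ^ 2) :=
    (((expBoundedOn_sub_ofReal isBounded_ball).mul (hgauss _ isBounded_ball 2)).const_mul
      (-2 * c ^ 2)).mono subset_rfl (by norm_num) |>.congr fun x u => by ring
  have hderiv := hasDerivAt_integral_Iio (fun x => by fun_prop) (by fun_prop)
    (hgauss _ Bornology.isBounded_singleton 1) hF'
    fun x u => by simpa using ((hasDerivAt_id x).sub_const (u : ℂ)).cexp_neg_mul_sq ((c : ℂ) ^ 2)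
  have hprim (u : ℝ) : HasDerivAt (fun u : ℝ => -cexp (-c ^ 2 * (m - u) ^ 2))
      (-2 * c ^ 2 * (m - u) * cexp (-c ^ 2 * (m - u) ^ 2)) u := by
    simpa using
      (((hasDerivAt_id (u : ℂ)).const_sub m).cexp_neg_mul_sq ((c : ℂ) ^ 2)).neg.comp_ofReal
  have hFTC : ∫ u in Iio (0 : ℝ), -2 * c ^ 2 * (m - u) * cexp (-c ^ 2 * (m - u) ^ 2)
      = -cexp (-c ^ 2 * m ^ 2) := by
    rw [← integral_Iic_eq_integral_Iio, integral_Iic_of_hasDerivAt_of_tendsto' (m := 0)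
      (fun u _ => hprim u) (hF'.integrableOn (mem_ball_self one_pos) (by fun_prop))
      ((hgauss _ Bornology.isBounded_singleton 1).neg.tendsto_atBot one_pos (mem_singleton m))]
    simp
  rwa [hFTC] at hderiv

theorem integral_Iio_cexp_neg_sq_mul_sub {c : ℝ} (hc : 0 < c) (m : ℂ) :
    ∫ u in Iio (0 : ℝ), cexp (-c ^ 2 * (m - u) ^ 2) = √π / (2 * c) * cerfc (c * m) := by
  have hπ : (√π : ℂ) ≠ 0 := by exact_mod_cast (sqrt_pos.2 pi_pos).ne'
  have hc' : (c : ℂ) ≠ 0 := by exact_mod_cast hc.ne'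
  have hdiff (m : ℂ) : HasDerivAt (fun m => (∫ u in Iio (0 : ℝ), cexp (-c ^ 2 * (m - u) ^ 2))
      - √π / (2 * c) * cerfc (c * m)) 0 m :=
    ((hasDerivAt_integral_Iio_cexp_neg_sq hc m).fun_sub
      (((hasDerivAt_id' m).const_mul (c : ℂ)).cerfc.const_mul (√π / (2 * c) : ℂ))).congr_deriv
      (by field_simp; ring)
  have hconst := is_const_of_deriv_eq_zero (fun m => (hdiff m).differentiableAt)
    (fun m => (hdiff m).deriv) m (0 : ℂ)
  simp only [zero_sub, neg_sq, integral_Iio_cexp_neg_sq hc, mul_zero, cerfc_zero] at hconst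
  linear_combination hconst

theorem integral_Iio_cexp_neg_two_mul_sq_mul (z w : ℂ) :
    ∫ u in Iio (0 : ℝ), cexp (-2 * (z - u) ^ 2) * cexp (-2 * (w - u) ^ 2)
      = √π / 4 * cexp (-(z - w) ^ 2) * cerfc (z + w) := by
  have hprod (u : ℝ) : cexp (-2 * (z - u) ^ 2) * cexp (-2 * (w - u) ^ 2)
      = cexp (-(z - w) ^ 2) * cexp (-(2 : ℝ) ^ 2 * ((z + w) / 2 - u) ^ 2) := by
    rw [← Complex.exp_add, ← Complex.exp_add]
    push_cast
    ring_nf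
  simp_rw [hprod]
  rw [integral_const_mul, integral_Iio_cexp_neg_sq_mul_sub two_pos]
  push_cast
  ring_nf

theorem ofReal_sqrt_two_sq : ((√2 : ℝ) : ℂ) ^ 2 = 2 := by
  rw [← Complex.ofReal_pow, sq_sqrt zero_le_two, Complex.ofReal_ofNat]

theorem HasDerivAt.cerfc_sqrt_two_mul {f : ℂ → ℂ} {f' x : ℂ} (hf : HasDerivAt f f' x) :
    HasDerivAt (fun x => _root_.cerfc (√2 * f x))
      (-(2 * √2 / √π) * cexp (-2 * f x ^ 2) * f') x := by
  refine (hf.const_mul (√2 : ℂ)).cerfc.congr_deriv ?_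
  simp only [mul_pow, ofReal_sqrt_two_sq, neg_mul]
  ring

theorem integrableOn_Iic_cexp_neg_two_mul_sq_mul (z w : ℂ) :
    IntegrableOn (fun u : ℝ => cexp (-2 * (z - u) ^ 2) * cexp (-2 * (w - u) ^ 2)) (Iic 0) :=
  (((expBoundedOn_cexp_neg_two_mul_sq Bornology.isBounded_singleton 1).mul
    ((expBoundedOn_cexp_neg_two_mul_sq Bornology.isBounded_singleton 0).comp_const
      (mem_singleton w))).mono subset_rfl (by norm_num)).integrableOn (mem_singleton z)
    (by fun_prop)

theorem hasDerivAt_cexp_neg_two_mul_sq_mul_cerfc (z w : ℂ) (u : ℝ) :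
    HasDerivAt (fun u : ℝ => cexp (-2 * (z - u) ^ 2) * cerfc (√2 * (w - u)))
      (4 * (z - u) * cexp (-2 * (z - u) ^ 2) * cerfc (√2 * (w - u))
        + 2 * √2 / √π * (cexp (-2 * (z - u) ^ 2) * cexp (-2 * (w - u) ^ 2))) u := by
  have hlin (a : ℂ) : HasDerivAt (fun s : ℂ => a - s) (-1) u := (hasDerivAt_id' _).const_sub a
  refine (((hlin z).cexp_neg_mul_sq 2).mul (hlin w).cerfc_sqrt_two_mul).comp_ofReal.congr_deriv ?_
  ring

theorem integrableOn_Iic_deriv_cexp_neg_two_mul_sq_mul_cerfc (z w : ℂ) :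
    IntegrableOn (fun u : ℝ => 4 * (z - u) * cexp (-2 * (z - u) ^ 2) * cerfc (√2 * (w - u))
      + 2 * √2 / √π * (cexp (-2 * (z - u) ^ 2) * cexp (-2 * (w - u) ^ 2))) (Iic 0) := by
  have hE : ExpBoundedOn {z} (-1) fun _ u => cerfc (√2 * (w - u)) :=
    (expBoundedOn_cerfc_mul_sub Bornology.isBounded_singleton _).comp_const (mem_singleton w)
  have h : ExpBoundedOn {z} 1
      fun x u => 4 * (x - u) * cexp (-2 * (x - u) ^ 2) * cerfc (√2 * (w - u)) :=
    (((expBoundedOn_sub_ofReal Bornology.isBounded_singleton).mul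
      (expBoundedOn_cexp_neg_two_mul_sq Bornology.isBounded_singleton 3)).mul hE).const_mul 4
      |>.mono subset_rfl (by norm_num) |>.congr fun x u => by ring
  exact (h.integrableOn (mem_singleton z) (by fun_prop)).add
    ((integrableOn_Iic_cexp_neg_two_mul_sq_mul z w).const_mul _)

theorem integral_Iic_deriv_cexp_neg_two_mul_sq_mul_cerfc (z w : ℂ) :
    ∫ u in Iic (0 : ℝ), (4 * (z - u) * cexp (-2 * (z - u) ^ 2) * cerfc (√2 * (w - u))
      + 2 * √2 / √π * (cexp (-2 * (z - u) ^ 2) * cexp (-2 * (w - u) ^ 2)))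
      = cexp (-2 * z ^ 2) * cerfc (√2 * w) := by
  have hlim : Tendsto (fun u : ℝ => cexp (-2 * (z - u) ^ 2) * cerfc (√2 * (w - u))) atBot (𝓝 0) :=
    ((expBoundedOn_cexp_neg_two_mul_sq Bornology.isBounded_singleton 2).mul
      ((expBoundedOn_cerfc_mul_sub Bornology.isBounded_singleton _).comp_const
        (mem_singleton w))).tendsto_atBot (by norm_num) (mem_singleton z)
  rw [integral_Iic_of_hasDerivAt_of_tendsto'
    (fun u _ => hasDerivAt_cexp_neg_two_mul_sq_mul_cerfc z w u)
    (integrableOn_Iic_deriv_cexp_neg_two_mul_sq_mul_cerfc z w) hlim]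
  simp

theorem integral_Iio_deriv_fEdge_integrand (z w : ℂ) :
    ∫ u in Iio (0 : ℝ), (-4 * (z - u) * cexp (-2 * (z - u) ^ 2) * cerfc (√2 * (w - u))
      + 2 * √2 / √π * (cexp (-2 * (z - u) ^ 2) * cexp (-2 * (w - u) ^ 2)))
      = √2 * cexp (-(z - w) ^ 2) * cerfc (z + w) - cexp (-2 * z ^ 2) * cerfc (√2 * w) := by
  -- the integrand is `4√2/√π` times the Gaussian product minus a `u`-derivative
  have hsplit : ∫ u in Iio (0 : ℝ), (-4 * (z - u) * cexp (-2 * (z - u) ^ 2) * cerfc (√2 * (w - u))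
      + 2 * √2 / √π * (cexp (-2 * (z - u) ^ 2) * cexp (-2 * (w - u) ^ 2)))
      = 4 * √2 / √π * (∫ u in Iio (0 : ℝ), cexp (-2 * (z - u) ^ 2) * cexp (-2 * (w - u) ^ 2))
        - ∫ u in Iic (0 : ℝ), (4 * (z - u) * cexp (-2 * (z - u) ^ 2) * cerfc (√2 * (w - u))
          + 2 * √2 / √π * (cexp (-2 * (z - u) ^ 2) * cexp (-2 * (w - u) ^ 2))) := by
    rw [← integral_Iic_eq_integral_Iio, ← integral_Iic_eq_integral_Iio, ← integral_const_mul,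
      ← integral_sub ((integrableOn_Iic_cexp_neg_two_mul_sq_mul z w).const_mul _)
        (integrableOn_Iic_deriv_cexp_neg_two_mul_sq_mul_cerfc z w)]
    congr 1 with u
    ring
  have hπ : (√π : ℂ) ≠ 0 := by exact_mod_cast (sqrt_pos.2 pi_pos).ne'
  rw [hsplit, integral_Iio_cexp_neg_two_mul_sq_mul,
    integral_Iic_deriv_cexp_neg_two_mul_sq_mul_cerfc]
  field_simp

theorem hasDerivAt_fEdge (z w : ℂ) :
    HasDerivAt (fun x => fEdge x w)
      (cexp (-(z - w) ^ 2) * cerfc (z + w) - 1 / √2 * cexp (-2 * z ^ 2) * cerfc (√2 * w)) z := by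
  have hg (s : Set ℂ) (hs : Bornology.IsBounded s) := expBoundedOn_cexp_neg_two_mul_sq hs
  have hgw (s : Set ℂ) (k : ℝ) : ExpBoundedOn s k fun _ u => cexp (-2 * (w - u) ^ 2) :=
    (hg _ Bornology.isBounded_singleton k).comp_const (mem_singleton w)
  have hEw (s : Set ℂ) : ExpBoundedOn s (-1) fun _ u => cerfc (√2 * (w - u)) :=
    (expBoundedOn_cerfc_mul_sub Bornology.isBounded_singleton _).comp_const (mem_singleton w)
  have hF : ExpBoundedOn {z} 1 fun x u => cexp (-2 * (x - u) ^ 2) * cerfc (√2 * (w - u))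
      - cexp (-2 * (w - u) ^ 2) * cerfc (√2 * (x - u)) :=
    (((hg _ Bornology.isBounded_singleton 2).mul (hEw _)).sub
      ((hgw _ 2).mul (expBoundedOn_cerfc_mul_sub Bornology.isBounded_singleton _))).mono
      subset_rfl (by norm_num)
  have hF' : ExpBoundedOn (ball z 1) 1 fun x u => -4 * (x - u) * cexp (-2 * (x - u) ^ 2) *
      cerfc (√2 * (w - u)) + 2 * √2 / √π * (cexp (-2 * (x - u) ^ 2) * cexp (-2 * (w - u) ^ 2)) :=
    ((((expBoundedOn_sub_ofReal isBounded_ball).mul (hg _ isBounded_ball 3)).mul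
      (hEw _)).const_mul (-4) |>.mono subset_rfl (by norm_num) |>.congr fun x u => by ring).add
      ((((hg _ isBounded_ball 1).mul (hgw _ 0)).const_mul _).mono subset_rfl (by norm_num))
  have hderiv (x : ℂ) (u : ℝ) : HasDerivAt (fun x => cexp (-2 * (x - u) ^ 2) * cerfc (√2 * (w - u))
      - cexp (-2 * (w - u) ^ 2) * cerfc (√2 * (x - u)))
      (-4 * (x - u) * cexp (-2 * (x - u) ^ 2) * cerfc (√2 * (w - u))
        + 2 * √2 / √π * (cexp (-2 * (x - u) ^ 2) * cexp (-2 * (w - u) ^ 2))) x := by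
    have hlin : HasDerivAt (fun x : ℂ => x - u) 1 x := (hasDerivAt_id' x).sub_const _
    refine ((hlin.cexp_neg_mul_sq 2).mul_const _).sub (hlin.cerfc_sqrt_two_mul.const_mul _)
      |>.congr_deriv ?_
    ring
  have h := (hasDerivAt_integral_Iio (fun x => by fun_prop) (by fun_prop) hF hF'
    hderiv).const_mul (1 / √2 : ℂ)
  rw [integral_Iio_deriv_fEdge_integrand] at h
  have hsqrt2 : (√2 : ℂ) ≠ 0 := by exact_mod_cast (sqrt_pos.2 two_pos).ne'
  refine h.congr_deriv ?_
  field_simp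

theorem stmt11 (z w : ℂ) :
    HasDerivAt (fun z => kappaHat z w)
      (2 * (z - w) * kappaHat z w + cerfc (z + w)
        - (1 / (Real.sqrt 2 : ℂ)) * Complex.exp ((z - w) ^ 2 - 2 * z ^ 2) *
            cerfc ((Real.sqrt 2 : ℂ) * w)) z := by
  have hexp : HasDerivAt (fun x => cexp ((x - w) ^ 2)) (2 * (z - w) * cexp ((z - w) ^ 2)) z :=
    (((hasDerivAt_id' z).sub_const w).fun_pow 2).cexp.congr_deriv (by ring)
  refine (hexp.mul (hasDerivAt_fEdge z w)).congr_deriv ?_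
  have h₁ : cexp ((z - w) ^ 2) * cexp (-(z - w) ^ 2) = 1 := by
    rw [← Complex.exp_add, add_neg_cancel, Complex.exp_zero]
  have h₂ : cexp ((z - w) ^ 2) * cexp (-2 * z ^ 2) = cexp ((z - w) ^ 2 - 2 * z ^ 2) := by
    rw [← Complex.exp_add]; ring_nf
  rw [kappaHat, ← h₂]
  linear_combination cerfc (z + w) * h₁
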